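/- Let z₁,…,z_m ∈ ℝ^ℓ and σ₁ > σ₂ > 0, σ₃,…,σ_m > 0, and suppose S = Σ_{l=1}^m σ_l² z_l z_lᵀ is invertible, as is the matrix S' obtained from S by swapping σ₁ and σ₂ (i.e., S' = S + (σ₂²−σ₁²) z₁ z₁ᵀ + (σ₁²−σ₂²) z₂ z₂ᵀ). If additionally z₂ᵀ (S − σ₁² z₁ z₁ᵀ)⁻¹ z₁ ≠ 0 and S − σ₁² z₁ z₁ᵀ, S' − σ₂² z₁ z₁ᵀ are positive definite, then σ₂² z₁ᵀ (S')⁻¹ z₁ < σ₁² z₁ᵀ S⁻¹ z₁. -/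

import Mathlib

/-!
Put `B = S - σ₁² z₁ z₁ᵀ` and `B' = B + (σ₁² - σ₂²) z₂ z₂ᵀ`, so that `S = B + σ₁² z₁ z₁ᵀ` and
`S' = B' + σ₂² z₁ z₁ᵀ`. By Sherman–Morrison, `σ² z₁ᵀ (C + σ² z₁ z₁ᵀ)⁻¹ z₁ = t / (1 + t)` with
`t = σ² z₁ᵀ C⁻¹ z₁`, an increasing function of `t ≥ 0`. Sherman–Morrison also shows that the
update `B ↦ B'` lowers `z₁ᵀ B⁻¹ z₁` by `(σ₁² - σ₂²) (z₂ᵀ B⁻¹ z₁)² / (1 + (σ₁² - σ₂²) z₂ᵀ B⁻¹ z₂) > 0`,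
so `σ₂² z₁ᵀ B'⁻¹ z₁ < σ₁² z₁ᵀ B⁻¹ z₁`.
-/

open Matrix

namespace Matrix

variable {n : Type*} [Fintype n]

theorem PosDef.add_smul_vecMulVec_self {A : Matrix n n ℝ} (hA : A.PosDef) {c : ℝ} (hc : 0 ≤ c)
    (y : n → ℝ) : (A + c • vecMulVec y y).PosDef := by
  simpa using hA.add_posSemidef ((posSemidef_vecMulVec_self_star y).smul hc)

variable [DecidableEq n]

theorem det_add_vecMulVec {K : Type*} [Field K] {A : Matrix n n K} (hA : IsUnit A.det)
    (x y : n → K) :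
    (A + vecMulVec x y).det = A.det * (1 + y ⬝ᵥ A⁻¹ *ᵥ x) := by
  rw [vecMulVec_eq Unit, det_add_replicateCol_mul_replicateRow hA, Matrix.mul_assoc,
    ← replicateCol_mulVec, det_unique (1 + _), add_apply, one_apply_eq,
    replicateRow_mul_replicateCol_apply]

/-- The Sherman–Morrison formula, applied to a vector. -/
theorem inv_add_vecMulVec_mulVec {K : Type*} [Field K] {A : Matrix n n K} (hA : IsUnit A.det)
    {x y : n → K} (hden : 1 + y ⬝ᵥ A⁻¹ *ᵥ x ≠ 0) (w : n → K) :
    (A + vecMulVec x y)⁻¹ *ᵥ w =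
      A⁻¹ *ᵥ w - ((y ⬝ᵥ A⁻¹ *ᵥ w) / (1 + y ⬝ᵥ A⁻¹ *ᵥ x)) • A⁻¹ *ᵥ x := by
  have hM : IsUnit (A + vecMulVec x y).det := by
    rw [det_add_vecMulVec hA]; exact hA.mul hden.isUnit
  let := invertibleOfIsUnitDet _ hM
  refine inv_mulVec_eq_vec ?_
  have hAA : ∀ v, A *ᵥ (A⁻¹ *ᵥ v) = v := fun v => by
    rw [mulVec_mulVec, mul_nonsing_inv _ hA, one_mulVec]
  rw [add_mulVec, vecMulVec_mulVec, mulVec_sub, mulVec_smul, hAA, hAA, dotProduct_sub,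
    dotProduct_smul, smul_eq_mul]
  ext i
  simp only [Pi.add_apply, Pi.sub_apply, Pi.smul_apply, smul_eq_mul,
    MulOpposite.smul_eq_mul_unop, MulOpposite.unop_op]
  field_simp
  ring

theorem PosDef.dotProduct_inv_add_smul_vecMulVec_self_mulVec {A : Matrix n n ℝ} (hA : A.PosDef)
    {c : ℝ} (hc : 0 ≤ c) (y w : n → ℝ) :
    w ⬝ᵥ (A + c • vecMulVec y y)⁻¹ *ᵥ w =
      w ⬝ᵥ A⁻¹ *ᵥ w - c * (y ⬝ᵥ A⁻¹ *ᵥ w) ^ 2 / (1 + c * (y ⬝ᵥ A⁻¹ *ᵥ y)) := by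
  have hsymm : w ⬝ᵥ A⁻¹ *ᵥ y = y ⬝ᵥ A⁻¹ *ᵥ w := by
    rw [dotProduct_mulVec, ← mulVec_transpose, ← conjTranspose_eq_transpose_of_trivial,
      hA.inv.isHermitian.eq, dotProduct_comm]
  have ha : 0 ≤ y ⬝ᵥ A⁻¹ *ᵥ y := by simpa using hA.inv.posSemidef.dotProduct_mulVec_nonneg y
  have hden : 1 + y ⬝ᵥ A⁻¹ *ᵥ (c • y) ≠ 0 := by
    rw [mulVec_smul, dotProduct_smul, smul_eq_mul]
    positivity
  rw [← smul_vecMulVec, inv_add_vecMulVec_mulVec hA.det_pos.ne'.isUnit hden,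
    dotProduct_sub, dotProduct_smul, smul_eq_mul, mulVec_smul, dotProduct_smul, dotProduct_smul,
    smul_eq_mul, smul_eq_mul, hsymm]
  ring

theorem PosDef.dotProduct_inv_add_smul_vecMulVec_self_mulVec_self {A : Matrix n n ℝ}
    (hA : A.PosDef) {c : ℝ} (hc : 0 ≤ c) (y : n → ℝ) :
    y ⬝ᵥ (A + c • vecMulVec y y)⁻¹ *ᵥ y = (y ⬝ᵥ A⁻¹ *ᵥ y) / (1 + c * (y ⬝ᵥ A⁻¹ *ᵥ y)) := by
  have ha : 0 ≤ y ⬝ᵥ A⁻¹ *ᵥ y := by simpa using hA.inv.posSemidef.dotProduct_mulVec_nonneg y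
  rw [hA.dotProduct_inv_add_smul_vecMulVec_self_mulVec hc]
  field_simp
  ring

theorem PosDef.dotProduct_inv_add_smul_vecMulVec_self_mulVec_lt {A : Matrix n n ℝ}
    (hA : A.PosDef) {c : ℝ} (hc : 0 < c) {y w : n → ℝ} (hyw : y ⬝ᵥ A⁻¹ *ᵥ w ≠ 0) :
    w ⬝ᵥ (A + c • vecMulVec y y)⁻¹ *ᵥ w < w ⬝ᵥ A⁻¹ *ᵥ w := by
  have ha : 0 ≤ y ⬝ᵥ A⁻¹ *ᵥ y := by simpa using hA.inv.posSemidef.dotProduct_mulVec_nonneg y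
  rw [hA.dotProduct_inv_add_smul_vecMulVec_self_mulVec hc.le, sub_lt_self_iff]
  positivity

end Matrix

theorem div_one_add_lt_div_one_add {s t : ℝ} (hs : 0 ≤ s) (hst : s < t) :
    s / (1 + s) < t / (1 + t) := by
  rw [div_lt_div_iff₀ (by positivity) (by linarith)]
  linarith

/-- Index `0` plays the role of `1`, and index `1` the role of `2`. -/
theorem stmt6_general (m l : ℕ) (z : Fin (m + 2) → Fin l → ℝ)
    (σ : Fin (m + 2) → ℝ) (hσpos : ∀ i, 0 < σ i) (hσ01 : σ 1 < σ 0)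
    (S S' : Matrix (Fin l) (Fin l) ℝ)
    (hS' : S' = S + (σ 1 ^ 2 - σ 0 ^ 2) • vecMulVec (z 0) (z 0)
        + (σ 0 ^ 2 - σ 1 ^ 2) • vecMulVec (z 1) (z 1))
    (hBpd : (S - σ 0 ^ 2 • vecMulVec (z 0) (z 0)).PosDef)
    (hnz : z 1 ⬝ᵥ (S - σ 0 ^ 2 • vecMulVec (z 0) (z 0))⁻¹.mulVec (z 0) ≠ 0) :
    σ 1 ^ 2 * (z 0 ⬝ᵥ S'⁻¹.mulVec (z 0)) < σ 0 ^ 2 * (z 0 ⬝ᵥ S⁻¹.mulVec (z 0)) := by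
  set B := S - σ 0 ^ 2 • vecMulVec (z 0) (z 0)
  have hσsq : σ 1 ^ 2 < σ 0 ^ 2 := pow_lt_pow_left₀ hσ01 (hσpos 1).le two_ne_zero
  set B' := B + (σ 0 ^ 2 - σ 1 ^ 2) • vecMulVec (z 1) (z 1)
  have hB'pd : B'.PosDef := hBpd.add_smul_vecMulVec_self (sub_nonneg.mpr hσsq.le) _
  have hS_eq : S = B + σ 0 ^ 2 • vecMulVec (z 0) (z 0) := (sub_add_cancel _ _).symm
  have hS'_eq : S' = B' + σ 1 ^ 2 • vecMulVec (z 0) (z 0) := by rw [hS']; module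
  have hz0 : z 0 ≠ 0 := by rintro h; simp [h] at hnz
  have hlt : z 0 ⬝ᵥ B'⁻¹ *ᵥ z 0 < z 0 ⬝ᵥ B⁻¹ *ᵥ z 0 :=
    hBpd.dotProduct_inv_add_smul_vecMulVec_self_mulVec_lt (sub_pos.mpr hσsq) hnz
  have hpos : 0 < z 0 ⬝ᵥ B'⁻¹ *ᵥ z 0 := by simpa using hB'pd.inv.dotProduct_mulVec_pos hz0
  rw [hS_eq, hS'_eq, hBpd.dotProduct_inv_add_smul_vecMulVec_self_mulVec_self (by positivity),
    hB'pd.dotProduct_inv_add_smul_vecMulVec_self_mulVec_self (by positivity), mul_div_assoc',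
    mul_div_assoc']
  refine div_one_add_lt_div_one_add (by positivity) ?_
  calc σ 1 ^ 2 * (z 0 ⬝ᵥ B'⁻¹ *ᵥ z 0) < σ 0 ^ 2 * (z 0 ⬝ᵥ B'⁻¹ *ᵥ z 0) := by gcongr
    _ < σ 0 ^ 2 * (z 0 ⬝ᵥ B⁻¹ *ᵥ z 0) := by have := hσpos 0; gcongr

/-- Swapping the two largest weights σ₁² and σ₂² (attached to z₁, z₂) strictly
decreases the quadratic form σ₁² z₁ᵀ S⁻¹ z₁, under the stated nondegeneracy
conditions. Here index 0 plays the role of 1, and index 1 the role of 2. -/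
theorem stmt6 (m l : ℕ) (hl : l < m + 2) (z : Fin (m + 2) → Fin l → ℝ)
    (σ : Fin (m + 2) → ℝ) (hσpos : ∀ i, 0 < σ i) (hσ01 : σ 1 < σ 0)
    (S S' : Matrix (Fin l) (Fin l) ℝ)
    (hS : S = ∑ t, σ t ^ 2 • vecMulVec (z t) (z t))
    (hS' : S' = S + (σ 1 ^ 2 - σ 0 ^ 2) • vecMulVec (z 0) (z 0)
        + (σ 0 ^ 2 - σ 1 ^ 2) • vecMulVec (z 1) (z 1))
    (hSinv : IsUnit S.det) (hS'inv : IsUnit S'.det)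
    (hBpd : (S - σ 0 ^ 2 • vecMulVec (z 0) (z 0)).PosDef)
    (hB'pd : (S' - σ 1 ^ 2 • vecMulVec (z 0) (z 0)).PosDef)
    (hnz : z 1 ⬝ᵥ (S - σ 0 ^ 2 • vecMulVec (z 0) (z 0))⁻¹.mulVec (z 0) ≠ 0) :
    σ 1 ^ 2 * (z 0 ⬝ᵥ S'⁻¹.mulVec (z 0)) < σ 0 ^ 2 * (z 0 ⬝ᵥ S⁻¹.mulVec (z 0)) :=
  stmt6_general m l z σ hσpos hσ01 S S' hS' hBpd hnz
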